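/- arXiv:1307.4142 — 2 statements merged into one kernel-verified Lean document; each statement's English description precedes it below -/
import Mathlib

section
/- Let R be a ring with involution and let p, q ∈ R be projections. If p + q and p + q - 1 are both Moore–Penrose invertible, then pq + qp is Moore–Penrose invertible and (pq + qp)^† = (p + q)^†·(p + q - 1)^†. -/
/-- `b` is a Moore–Penrose inverse of `a`. -/
def IsMPInv {R : Type*} [Ring R] [StarRing R] (a b : R) : Prop :=
  a * b * a = a ∧ b * a * b = b ∧ star (a * b) = a * b ∧ star (b * a) = b * a

/-- `a` is Moore–Penrose invertible. -/
def IsMPInvertible {R : Type*} [Ring R] [StarRing R] (a : R) : Prop :=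
  ∃ b, IsMPInv a b

/-- A projection: a self-adjoint idempotent. -/
def IsProjection {R : Type*} [Ring R] [StarRing R] (p : R) : Prop :=
  p * p = p ∧ star p = p

/-- A `*`-reducing ring: `a* a = 0` implies `a = 0`. -/
def IsStarReducing (R : Type*) [Ring R] [StarRing R] : Prop :=
  ∀ a : R, star a * a = 0 → a = 0

section Aux

variable {R : Type*} [Ring R] [StarRing R]

omit [StarRing R] in
private lemma swap_aux {x y : R} (h : x * y = y * x) (z : R) :
    x * (y * z) = y * (x * z) := by
  rw [← mul_assoc, h, mul_assoc]

/-- Uniqueness of the Moore–Penrose inverse. -/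
private lemma mp_unique {a x y : R} (hx : IsMPInv a x) (hy : IsMPInv a y) : x = y := by
  obtain ⟨hx1, hx2, hx3, hx4⟩ := hx
  obtain ⟨hy1, hy2, hy3, hy4⟩ := hy
  have hax : a * x = a * y := by
    calc a * x = a * y * (a * x) := by rw [← mul_assoc, hy1]
    _ = star (a * y) * star (a * x) := by rw [hy3, hx3]
    _ = star (a * x * (a * y)) := (star_mul _ _).symm
    _ = star (a * y) := by rw [← mul_assoc, hx1]
    _ = a * y := hy3
  have hxa : x * a = y * a := by
    calc x * a = x * (a * y * a) := by rw [hy1]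
    _ = x * a * (y * a) := by simp only [mul_assoc]
    _ = star (x * a) * star (y * a) := by rw [hx4, hy4]
    _ = star (y * a * (x * a)) := (star_mul _ _).symm
    _ = star (y * a) := by rw [mul_assoc y a (x * a), ← mul_assoc a x a, hx1]
    _ = y * a := hy4
  calc x = x * a * x := hx2.symm
  _ = x * a * y := by rw [mul_assoc, hax, ← mul_assoc]
  _ = y * a * y := by rw [hxa]
  _ = y := hy2

private lemma mp_star {a x : R} (h : IsMPInv a x) : IsMPInv (star a) (star x) := by
  obtain ⟨h1, h2, h3, h4⟩ := h
  refine ⟨?_, ?_, ?_, ?_⟩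
  · rw [← star_mul, ← star_mul, ← mul_assoc, h1]
  · rw [← star_mul, ← star_mul, ← mul_assoc, h2]
  · simp only [← star_mul, star_star]
    exact h4.symm
  · simp only [← star_mul, star_star]
    exact h3.symm

/-- The MP inverse of a self-adjoint element is self-adjoint. -/
private lemma mp_self {a x : R} (ha : star a = a) (h : IsMPInv a x) : star x = x := by
  have h' := mp_star h
  rw [ha] at h'
  exact mp_unique h' h

/-- If `x` and `star x` commute with `b`, then `x` commutes with any MP inverse of `b`. -/
private lemma mp_comm {b t x : R} (h : IsMPInv b t) (hx : x * b = b * x)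
    (hx' : star x * b = b * star x) : x * t = t * x := by
  obtain ⟨h1, h2, h3, h4⟩ := h
  have key : ∀ y : R, y * b = b * y → b * t * y * (b * t) = y * (b * t) := by
    intro y hy
    calc b * t * y * (b * t) = b * t * (y * b) * t := by simp only [mul_assoc]
    _ = b * t * (b * y) * t := by rw [hy]
    _ = b * t * b * (y * t) := by simp only [mul_assoc]
    _ = b * (y * t) := by rw [h1]
    _ = y * b * t := by rw [← mul_assoc, ← hy]
    _ = y * (b * t) := by rw [mul_assoc]
  have k1 := key x hx
  have k2 := key (star x) hx'
  have hE : star t * star b = b * t := by rw [← star_mul, h3]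
  have k2s : b * t * x * (b * t) = b * t * x := by
    have h5 := congrArg star k2
    simp only [star_mul, star_star] at h5
    rw [hE] at h5
    calc b * t * x * (b * t) = b * t * (x * (b * t)) := by simp only [mul_assoc]
    _ = b * t * x := h5
  have hex : x * (b * t) = b * t * x := k1.symm.trans k2s
  have key' : ∀ y : R, y * b = b * y → t * b * y * (t * b) = t * b * y := by
    intro y hy
    calc t * b * y * (t * b) = t * (b * y) * (t * b) := by simp only [mul_assoc]
    _ = t * (y * b) * (t * b) := by rw [hy]
    _ = t * y * (b * t * b) := by simp only [mul_assoc]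
    _ = t * y * b := by rw [h1]
    _ = t * (y * b) := by rw [mul_assoc]
    _ = t * (b * y) := by rw [hy]
    _ = t * b * y := by rw [← mul_assoc]
  have k1' := key' x hx
  have k2' := key' (star x) hx'
  have hF : star b * star t = t * b := by rw [← star_mul, h4]
  have k2s' : t * b * (x * (t * b)) = x * (t * b) := by
    have h5 := congrArg star k2'
    simp only [star_mul, star_star] at h5
    rw [hF] at h5
    exact h5
  have hfx : t * b * x = x * (t * b) := by
    calc t * b * x = t * b * x * (t * b) := k1'.symm
    _ = t * b * (x * (t * b)) := by simp only [mul_assoc]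
    _ = x * (t * b) := k2s'
  calc x * t = x * (t * b * t) := by rw [h2]
  _ = x * (t * b) * t := by simp only [mul_assoc]
  _ = t * b * x * t := by rw [← hfx]
  _ = t * ((b * x) * t) := by simp only [mul_assoc]
  _ = t * ((x * b) * t) := by rw [← hx]
  _ = t * (x * (b * t)) := by rw [mul_assoc]
  _ = t * (b * t * x) := by rw [hex]
  _ = t * x := by rw [← mul_assoc, ← mul_assoc, h2]

/-- Key abstract lemma: if `a` is self-adjoint, `b = a - 1`, and `s`, `t` are MP inverses
of `a` and `b`, then `s * t` is an MP inverse of `a * b`. -/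
private lemma mp_prod {a b s t : R} (ha : star a = a) (hb : b = a - 1)
    (hs : IsMPInv a s) (ht : IsMPInv b t) : IsMPInv (a * b) (s * t) := by
  have hbstar : star b = b := by rw [hb, star_sub, star_one, ha]
  have hss : star s = s := mp_self ha hs
  have htt : star t = t := mp_self hbstar ht
  -- basic commutations, oriented for the order s < a < t < b
  have has : a * s = s * a := by
    have h := hs.2.2.1
    rw [star_mul, hss, ha] at h
    exact h.symm
  have hbt : b * t = t * b := by
    have h := ht.2.2.1
    rw [star_mul, htt, hbstar] at h
    exact h.symm
  have hbs : b * s = s * b := by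
    rw [hb, sub_mul, mul_sub, one_mul, mul_one, has]
  have hta : t * a = a * t := by
    have h : a = b + 1 := by rw [hb, sub_add_cancel]
    rw [h, mul_add, add_mul, mul_one, one_mul, hbt]
  have hba : b * a = a * b := by
    rw [hb, sub_mul, mul_sub, one_mul, mul_one]
  have hts : t * s = s * t := by
    have h := mp_comm ht (by rw [← hbs]) (by rw [hss, ← hbs])
    exact h.symm
  -- swap lemmas
  have Sas := swap_aux has
  have Sbt := swap_aux hbt
  have Sbs := swap_aux hbs
  have Sta := swap_aux hta
  have Sba := swap_aux hba
  have Sts := swap_aux hts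
  -- contractions
  have C1' : s * (a * a) = a := by rw [← mul_assoc, ← has, hs.1]
  have C1 : ∀ z, s * (a * (a * z)) = a * z := fun z => by
    rw [show s * (a * (a * z)) = s * (a * a) * z by simp only [mul_assoc], C1']
  have C2' : s * (s * a) = s := by rw [← has, ← mul_assoc, hs.2.1]
  have C2 : ∀ z, s * (s * (a * z)) = s * z := fun z => by
    rw [show s * (s * (a * z)) = s * (s * a) * z by simp only [mul_assoc], C2']
  have C3' : t * (b * b) = b := by rw [← mul_assoc, ← hbt, ht.1]
  have C3 : ∀ z, t * (b * (b * z)) = b * z := fun z => by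
    rw [show t * (b * (b * z)) = t * (b * b) * z by simp only [mul_assoc], C3']
  have C4' : t * (t * b) = t := by rw [← hbt, ← mul_assoc, ht.2.1]
  have C4 : ∀ z, t * (t * (b * z)) = t * z := fun z => by
    rw [show t * (t * (b * z)) = t * (t * b) * z by simp only [mul_assoc], C4']
  refine ⟨?_, ?_, ?_, ?_⟩
  · simp only [mul_assoc, Sas, Sbt, Sbs, Sta, Sba, Sts, has, hbt, hbs, hta, hba, hts,
      C1, C1', C2, C2', C3, C3', C4, C4']
  · simp only [mul_assoc, Sas, Sbt, Sbs, Sta, Sba, Sts, has, hbt, hbs, hta, hba, hts,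
      C1, C1', C2, C2', C3, C3', C4, C4']
  · simp only [star_mul, ha, hbstar, hss, htt]
    simp only [mul_assoc, Sas, Sbt, Sbs, Sta, Sba, Sts, has, hbt, hbs, hta, hba, hts,
      C1, C1', C2, C2', C3, C3', C4, C4']
  · simp only [star_mul, ha, hbstar, hss, htt]
    simp only [mul_assoc, Sas, Sbt, Sbs, Sta, Sba, Sts, has, hbt, hbs, hta, hba, hts,
      C1, C1', C2, C2', C3, C3', C4, C4']

end Aux

theorem stmt_17 {R : Type*} [Ring R] [StarRing R] (p q s t : R)
    (hp : IsProjection p) (hq : IsProjection q)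
    (hs : IsMPInv (p + q) s) (ht : IsMPInv (p + q - 1) t) :
    IsMPInv (p * q + q * p) (s * t) := by
  have hm : p * q + q * p = (p + q) * (p + q - 1) := by
    rw [mul_sub, mul_one, add_mul, mul_add, mul_add, hp.1, hq.1]
    abel
  have ha : star (p + q) = p + q := by rw [star_add, hp.2, hq.2]
  rw [hm]
  exact mp_prod ha rfl hs ht
end

section
/- Let R be a ring with involution and let p, q ∈ R be projections. If p - q is Moore–Penrose invertible, then (p-q)^†·(p-q) = (p-q)·(p-q)^†, and (p-q)² is Moore–Penrose invertible with ((p-q)²)^† = ((p-q)^†)². -/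
theorem mp_unique_s19 {R : Type*} [Ring R] [StarRing R] {a b c : R}
    (hb : IsMPInv a b) (hc : IsMPInv a c) : b = c := by
  obtain ⟨hb1, hb2, hb3, hb4⟩ := hb
  obtain ⟨hc1, hc2, hc3, hc4⟩ := hc
  have hab : a * b = a * c := by
    calc a * b = star (a * b) := hb3.symm
    _ = star b * star a := by rw [star_mul]
    _ = star b * star (a * c * a) := by conv_rhs => rw [hc1]
    _ = star b * (star a * star (a * c)) := by rw [star_mul (a * c) a]
    _ = star b * star a * star (a * c) := by rw [mul_assoc]
    _ = star (a * b) * star (a * c) := by rw [star_mul a b]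
    _ = a * b * (a * c) := by rw [hb3, hc3]
    _ = a * b * a * c := by noncomm_ring
    _ = a * c := by rw [hb1]
  have hba : b * a = c * a := by
    calc b * a = star (b * a) := hb4.symm
    _ = star a * star b := by rw [star_mul]
    _ = star (a * c * a) * star b := by conv_rhs => rw [hc1]
    _ = star a * star (a * c) * star b := by rw [star_mul (a * c) a]
    _ = star a * (star c * star a) * star b := by rw [star_mul a c]
    _ = star a * star c * (star a * star b) := by noncomm_ring
    _ = star (c * a) * star (b * a) := by rw [star_mul c a, star_mul b a]
    _ = c * a * (b * a) := by rw [hb4, hc4]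
    _ = c * (a * b * a) := by noncomm_ring
    _ = c * a := by rw [hb1]
  calc b = b * a * b := hb2.symm
  _ = c * a * b := by rw [hba]
  _ = c * (a * b) := by rw [mul_assoc]
  _ = c * (a * c) := by rw [hab]
  _ = c * a * c := by rw [mul_assoc]
  _ = c := hc2

theorem mp_selfadjoint_aux {R : Type*} [Ring R] [StarRing R] {a t : R}
    (ha : star a = a) (ht : IsMPInv a t) :
    t * a = a * t ∧ IsMPInv (a ^ 2) (t ^ 2) := by
  obtain ⟨h1, h2, h3, h4⟩ := ht
  have hts : IsMPInv a (star t) := by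
    refine ⟨?_, ?_, ?_, ?_⟩
    · have := congrArg star h1
      rwa [star_mul, star_mul, ha, ← mul_assoc] at this
    · have := congrArg star h2
      rwa [star_mul, star_mul, ha, ← mul_assoc] at this
    · calc star (a * star t) = t * star a := by rw [star_mul, star_star]
      _ = t * a := by rw [ha]
      _ = star (t * a) := h4.symm
      _ = a * star t := by rw [star_mul, ha]
    · calc star (star t * a) = star a * t := by rw [star_mul, star_star]
      _ = a * t := by rw [ha]
      _ = star (a * t) := h3.symm
      _ = star t * a := by rw [star_mul, ha]
  have htt : t = star t := mp_unique_s19 ⟨h1, h2, h3, h4⟩ hts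
  have comm : t * a = a * t := by
    calc t * a = star t * star a := by rw [← htt, ha]
    _ = star (a * t) := (star_mul a t).symm
    _ = a * t := h3
  have key1 : a ^ 2 * t ^ 2 = (a * t) * (a * t) := by
    calc a ^ 2 * t ^ 2 = a * (a * t) * t := by rw [sq, sq]; noncomm_ring
    _ = a * (t * a) * t := by rw [comm]
    _ = (a * t) * (a * t) := by noncomm_ring
  have key2 : t ^ 2 * a ^ 2 = (t * a) * (t * a) := by
    calc t ^ 2 * a ^ 2 = t * (t * a) * a := by rw [sq, sq]; noncomm_ring
    _ = t * (a * t) * a := by rw [comm]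
    _ = (t * a) * (t * a) := by noncomm_ring
  refine ⟨comm, ?_, ?_, ?_, ?_⟩
  · calc a ^ 2 * t ^ 2 * a ^ 2 = (a * t) * (a * t) * a ^ 2 := by rw [key1]
    _ = (a * t) * (a * t * a) * a := by rw [sq]; noncomm_ring
    _ = a * a := by rw [h1, h1]
    _ = a ^ 2 := (sq a).symm
  · calc t ^ 2 * a ^ 2 * t ^ 2 = (t * a) * (t * a) * t ^ 2 := by rw [key2]
    _ = (t * a) * (t * a * t) * t := by rw [sq]; noncomm_ring
    _ = t * t := by rw [h2, h2]
    _ = t ^ 2 := (sq t).symm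
  · rw [key1, star_mul, h3]
  · rw [key2, star_mul, h4]

theorem stmt_19 {R : Type*} [Ring R] [StarRing R] (p q t : R)
    (hp : IsProjection p) (hq : IsProjection q)
    (ht : IsMPInv (p - q) t) :
    t * (p - q) = (p - q) * t ∧ IsMPInv ((p - q) ^ 2) (t ^ 2) := by
  exact mp_selfadjoint_aux (by rw [star_sub, hp.2, hq.2]) ht
end
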